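/- arXiv:2605.25935 — 4 statements merged into one kernel-verified Lean document; each statement's English description precedes it below -/
import Mathlib

section
/- Let A be the companion matrix of f_55(x) = x^6 - 2x^5 + x^4 + x^2 - 2x + 1 and B the companion matrix of g_55(x) = x^6 + 2x^5 - 2x^3 + 2x + 1. Let Ω_55 be the antisymmetric 6×6 matrix with first row (0,1,6,3,4,5) and Toeplitz pattern Ω_{i,j} = ω_{j-i} for j > i with (ω_1,...,ω_5) = (1,6,3,4,5). Then Aᵀ Ω_55 A = Ω_55 and Bᵀ Ω_55 B = Ω_55. -/
open Matrix
set_option maxHeartbeats 2000000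

def A55 : Matrix (Fin 6) (Fin 6) ℚ :=
  !![0,0,0,0,0,-1; 1,0,0,0,0,2; 0,1,0,0,0,-1; 0,0,1,0,0,0; 0,0,0,1,0,-1; 0,0,0,0,1,2]

def B55 : Matrix (Fin 6) (Fin 6) ℚ :=
  !![0,0,0,0,0,-1; 1,0,0,0,0,-2; 0,1,0,0,0,0; 0,0,1,0,0,2; 0,0,0,1,0,0; 0,0,0,0,1,-2]

def Omega55 : Matrix (Fin 6) (Fin 6) ℚ :=
  !![0,1,6,3,4,5; -1,0,1,6,3,4; -6,-1,0,1,6,3;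
     -3,-6,-1,0,1,6; -4,-3,-6,-1,0,1; -5,-4,-3,-6,-1,0]


theorem symplectic_form_preserved_55 :
    A55ᵀ * Omega55 * A55 = Omega55 ∧ B55ᵀ * Omega55 * B55 = Omega55 := by
  constructor <;>
  · simp only [A55, B55, Omega55]
    rw [← Matrix.transposeᵣ_eq, ← Matrix.mulᵣ_eq, ← Matrix.mulᵣ_eq]
    with_unfolding_all rfl
end

section
/- Let A and B be the companion matrices of f_47(x) = x^6 - x^5 - x + 1 and g_47(x) = x^6 + 4x^5 + 8x^4 + 10x^3 + 8x^2 + 4x + 1 respectively, and set T = A⁻¹B. Then T - I has rank one and (T - I)² = 0; in particular T is a unipotent transvection. -/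
def A47 : Matrix (Fin 6) (Fin 6) ℚ :=
  !![0,0,0,0,0,-1; 1,0,0,0,0,1; 0,1,0,0,0,0; 0,0,1,0,0,0; 0,0,0,1,0,0; 0,0,0,0,1,1]

def B47 : Matrix (Fin 6) (Fin 6) ℚ :=
  !![0,0,0,0,0,-1; 1,0,0,0,0,-4; 0,1,0,0,0,-8; 0,0,1,0,0,-10; 0,0,0,1,0,-8; 0,0,0,0,1,-4]


noncomputable def T47 : Matrix (Fin 6) (Fin 6) ℚ := A47⁻¹ * B47

def Ai47 : Matrix (Fin 6) (Fin 6) ℚ :=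
  !![1,1,0,0,0,0; 0,0,1,0,0,0; 0,0,0,1,0,0; 0,0,0,0,1,0; 1,0,0,0,0,1; -1,0,0,0,0,0]

def M47 : Matrix (Fin 6) (Fin 6) ℚ :=
  !![0,0,0,0,0,-5; 0,0,0,0,0,-8; 0,0,0,0,0,-10; 0,0,0,0,0,-8; 0,0,0,0,0,-5; 0,0,0,0,0,0]

def C47 : Matrix (Fin 6) (Fin 1) ℚ := !![-5; -8; -10; -8; -5; 0]

def R47 : Matrix (Fin 1) (Fin 6) ℚ := !![0,0,0,0,0,1]

lemma one_fin_six' : (1 : Matrix (Fin 6) (Fin 6) ℚ) =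
    !![1,0,0,0,0,0; 0,1,0,0,0,0; 0,0,1,0,0,0; 0,0,0,1,0,0; 0,0,0,0,1,0; 0,0,0,0,0,1] := by
  ext i j; fin_cases i <;> fin_cases j <;> rfl

lemma hAi47 : A47 * Ai47 = 1 := by
  rw [A47, Ai47, one_fin_six']; norm_num

lemma hAinv47 : A47⁻¹ = Ai47 := Matrix.inv_eq_right_inv hAi47

lemma vz6 : ![0,0,0,0,0,(0:ℚ)] = 0 := by funext i; fin_cases i <;> rfl

lemma vz1 : (![0] : Fin 1 → Fin 6 → ℚ) = 0 := by funext i; fin_cases i <;> rfl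

lemma hT47 : T47 - 1 = M47 := by
  rw [T47, hAinv47, Ai47, B47, M47, one_fin_six']; norm_num
  simp [vz6, vz1]

lemma hCR47 : M47 = C47 * R47 := by
  rw [M47, C47, R47]; norm_num
  simp [vz6, vz1]

lemma hsq47 : M47 * M47 = 0 := by
  rw [M47]
  norm_num
  simp [vz6, vz1]

lemma h05 : M47 0 5 = -5 := rfl

lemma hrank47 : M47.rank = 1 := by
  refine le_antisymm ?_ ?_
  · calc M47.rank = (C47 * R47).rank := by rw [hCR47]
      _ ≤ R47.rank := Matrix.rank_mul_le_right _ _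
      _ ≤ Fintype.card (Fin 1) := Matrix.rank_le_card_height _
      _ = 1 := by simp
  · rw [Nat.one_le_iff_ne_zero]
    intro h
    have hr : LinearMap.range M47.mulVecLin = ⊥ := Submodule.finrank_eq_zero.mp h
    have h0 : M47.mulVecLin = 0 := LinearMap.range_eq_bot.mp hr
    have hv : M47.mulVec (Pi.single (5 : Fin 6) (1 : ℚ)) = 0 := by
      have := congrFun (congrArg DFunLike.coe h0) (Pi.single (5 : Fin 6) (1 : ℚ))
      simpa [Matrix.mulVecLin] using this
    have hz : M47 0 5 * 1 = 0 := by
      have := congrFun hv 0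
      rwa [Matrix.mulVec_single] at this
    rw [h05] at hz
    norm_num at hz

theorem T47_transvection :
    (T47 - 1).rank = 1 ∧ (T47 - 1) ^ 2 = 0 := by
  rw [hT47]
  exact ⟨hrank47, by rw [sq]; exact hsq47⟩
end

section
/- Let A and B be the companion matrices of f_55(x) = x^6 - 2x^5 + x^4 + x^2 - 2x + 1 and g_55(x) = x^6 + 2x^5 - 2x^3 + 2x + 1 respectively, and set T = A⁻¹B. Then T - I has rank one and (T - I)² = 0; in particular T is a unipotent transvection. -/
noncomputable def T55 : Matrix (Fin 6) (Fin 6) ℚ := A55⁻¹ * B55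

/-!
The companion matrices `A` and `B` differ only in their last column, so `B - A = u e₆ᵀ` with `u`
the difference of the (negated) coefficient vectors, and `T - 1 = A⁻¹ (B - A) = (A⁻¹ u) e₆ᵀ` has
rank one. Since `f₅₅(0) = g₅₅(0)`, the first entry of `u` vanishes; as `A` shifts `eᵢ` to `eᵢ₊₁`,
`A⁻¹ u` is `u` shifted up, whose last entry is `0`. Hence `e₆ᵀ A⁻¹ u = 0` and `(T - 1)² = 0`.
-/

namespace Matrix

variable {m n K : Type*} [Fintype n] [Field K]

theorem rank_eq_zero_iff (M : Matrix m n K) : M.rank = 0 ↔ M = 0 := by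
  classical
  rw [rank, Submodule.finrank_eq_zero, LinearMap.range_eq_bot, ← toLin'_apply',
    LinearEquiv.map_eq_zero_iff]

theorem rank_vecMulVec_eq_one {w : m → K} {v : n → K} (hw : w ≠ 0) (hv : v ≠ 0) :
    (vecMulVec w v).rank = 1 := by
  refine (rank_vecMulVec_le w v).antisymm <| Nat.one_le_iff_ne_zero.mpr <|
    (rank_eq_zero_iff _).not.mpr fun h => ?_
  obtain ⟨i, hi⟩ := Function.ne_iff.mp hw
  obtain ⟨j, hj⟩ := Function.ne_iff.mp hv
  exact mul_ne_zero hi hj congr($h i j)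

theorem vecMulVec_sq_eq_zero [DecidableEq n] {w v : n → K} (h : v ⬝ᵥ w = 0) :
    vecMulVec w v ^ 2 = 0 := by
  rw [sq, vecMulVec_mul_vecMulVec, h, zero_smul, vecMulVec_zero]

theorem inv_mul_sub_one_eq_vecMulVec [DecidableEq n] {A B : Matrix n n K} {u v w : n → K}
    (hA : IsUnit A.det) (hv : A *ᵥ v = u) (hB : B - A = vecMulVec u w) :
    A⁻¹ * B - 1 = vecMulVec v w := by
  rw [← nonsing_inv_mul A hA, ← mul_sub, hB, ← hv, ← mul_vecMulVec,
    nonsing_inv_mul_cancel_left _ _ hA]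

end Matrix

open Matrix

theorem A55_det : A55.det = 1 := by
  simp [A55, det_succ_row_zero, Fin.sum_univ_succ, Fin.succAbove]
  norm_num

theorem A55_mulVec : A55 *ᵥ ![-4, 1, 2, 1, -4, 0] = ![0, -4, 1, 2, 1, -4] := by
  ext i; fin_cases i <;> simp [A55, mulVec, dotProduct, Fin.sum_univ_succ]

theorem B55_sub_A55 : B55 - A55 = vecMulVec ![0, -4, 1, 2, 1, -4] (Pi.single 5 1) := by
  ext i j; fin_cases i <;> fin_cases j <;> simp [A55, B55, vecMulVec] <;> norm_num

theorem T55_transvection :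
    (T55 - 1).rank = 1 ∧ (T55 - 1) ^ 2 = 0 := by
  have hT : T55 - 1 = vecMulVec ![-4, 1, 2, 1, -4, 0] (Pi.single 5 1) :=
    inv_mul_sub_one_eq_vecMulVec (by simp [A55_det]) A55_mulVec B55_sub_A55
  rw [hT]
  refine ⟨rank_vecMulVec_eq_one ?_ ?_, vecMulVec_sq_eq_zero ?_⟩
  · exact fun h => by simpa using congrFun h 0
  · simp
  · simp
end

section
/- Let A, B be the companion matrices of f_55 and g_55, T = A⁻¹B, and let Ω_55 be the antisymmetric matrix with first row (0,1,6,3,4,5) and Toeplitz pattern. The image of T - I is spanned by x₁ = (-4,1,2,1,-4,0). Moreover, for x₂ = (40999920, -275447328, -132048384, 236325024, 314749968, 0), one has x₁ᵀ Ω_55 x₂ = 0 and x₁, x₂ are linearly independent. -/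
open Matrix

def x1_55 : Fin 6 → ℚ := ![-4, 1, 2, 1, -4, 0]

def x2_55 : Fin 6 → ℚ :=
  ![40999920, -275447328, -132048384, 236325024, 314749968, 0]

private lemma v5' : (5 : Fin 6) = Fin.succ (Fin.succ (Fin.succ (Fin.succ (Fin.succ 0)))) := rfl
private lemma v4' : (4 : Fin 6) = Fin.succ (Fin.succ (Fin.succ (Fin.succ 0))) := rfl
private lemma v3' : (3 : Fin 6) = Fin.succ (Fin.succ (Fin.succ 0)) := rfl
private lemma v2' : (2 : Fin 6) = Fin.succ (Fin.succ 0) := rfl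

def Ai55 : Matrix (Fin 6) (Fin 6) ℚ :=
  !![2,1,0,0,0,0; -1,0,1,0,0,0; 0,0,0,1,0,0; -1,0,0,0,1,0; 2,0,0,0,0,1; -1,0,0,0,0,0]

set_option maxHeartbeats 1000000 in
lemma Ai55_mul : Ai55 * A55 = 1 := by
  ext i j
  fin_cases i <;> fin_cases j <;>
    simp [Ai55, A55, Matrix.mul_apply, Fin.sum_univ_six, Matrix.one_apply,
      v2', v3', v4', v5', Matrix.cons_val_succ, Matrix.vecHead, Matrix.vecTail, Fin.ext_iff, Fin.val_succ] <;> (first | decide | norm_num)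

lemma A55_inv : A55⁻¹ = Ai55 := Matrix.inv_eq_left_inv Ai55_mul

set_option maxHeartbeats 1000000 in
lemma T55_sub_one : T55 - 1 =
    !![0,0,0,0,0,-4; 0,0,0,0,0,1; 0,0,0,0,0,2; 0,0,0,0,0,1; 0,0,0,0,0,-4; 0,0,0,0,0,0] := by
  rw [T55, A55_inv]
  ext i j
  fin_cases i <;> fin_cases j <;>
    simp [Ai55, B55, Matrix.mul_apply, Fin.sum_univ_six, Matrix.one_apply,
      v2', v3', v4', v5', Matrix.cons_val_succ, Matrix.vecHead, Matrix.vecTail, Fin.ext_iff, Fin.val_succ] <;> (first | decide | norm_num)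

lemma mulvec_eq (v : Fin 6 → ℚ) : (T55 - 1) *ᵥ v = v 5 • x1_55 := by
  rw [T55_sub_one]
  ext i
  fin_cases i <;>
    simp [Matrix.mulVec, dotProduct, Fin.sum_univ_six, x1_55,
      v2', v3', v4', v5', Matrix.cons_val_succ] <;> ring

theorem C55_orthogonal_directions :
    LinearMap.range (T55 - 1).mulVecLin = Submodule.span ℚ {x1_55} ∧
    x1_55 ⬝ᵥ (Omega55 *ᵥ x2_55) = 0 ∧
    LinearIndependent ℚ ![x1_55, x2_55] := by
  refine ⟨?_, ?_, ?_⟩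
  · apply le_antisymm
    · rintro _ ⟨v, rfl⟩
      rw [Matrix.mulVecLin_apply, mulvec_eq]
      exact Submodule.smul_mem _ _ (Submodule.subset_span rfl)
    · rw [Submodule.span_le, Set.singleton_subset_iff]
      refine ⟨![0,0,0,0,0,1], ?_⟩
      rw [Matrix.mulVecLin_apply, mulvec_eq]
      simp [v5', Matrix.cons_val_succ]
  · simp [Omega55, x1_55, x2_55, Matrix.mulVec, dotProduct, Fin.sum_univ_six,
      v2', v3', v4', v5', Matrix.cons_val_succ]
    norm_num
  · rw [LinearIndependent.pair_iff]
    intro s t h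
    have h0 := congrFun h 0
    have h1 := congrFun h 1
    simp [x1_55, x2_55] at h0 h1
    constructor <;> linarith
end
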